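/- arXiv:1711.04401 — 17 statements merged into one kernel-verified Lean document; each statement's English description precedes it below -/
import Mathlib

section
/- Suppose additionally that c k ≠ 0 for every k. Then the secular function g has exactly one zero in the interval (−∞, 1), and this zero λ* satisfies 0 ≤ λ* < 1 − |c 0|. -/
open Finset Set

/-- Lemma 2 of the paper: under the normalisation `s 0 = 1`, `∑ k, (c k)^2 = 1`,
with all `c k` nonzero, the secular function
`g(λ) = 1 - ∑ k, (c k)^2 / (λ - s k)^2` has exactly one zero in `(-∞, 1)`,
and this zero lies in `[0, 1 - |c 0|)`. -/
theorem secular_unique_root_below_one (M : ℕ) (s c : Fin (M + 2) → ℝ)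
    (hs : Monotone s) (hs0 : s 0 = 1)
    (hc : ∑ k, (c k) ^ 2 = 1) (hcne : ∀ k, c k ≠ 0) :
    (∃! lam : ℝ, lam < 1 ∧ 1 - ∑ k, (c k) ^ 2 / (lam - s k) ^ 2 = 0) ∧
      (∀ lam : ℝ, lam < 1 → 1 - ∑ k, (c k) ^ 2 / (lam - s k) ^ 2 = 0 →
        0 ≤ lam ∧ lam < 1 - |c 0|) := by
  have hsk : ∀ k, (1 : ℝ) ≤ s k := fun k => hs0 ▸ hs (Fin.zero_le k)
  set g : ℝ → ℝ := fun lam => 1 - ∑ k, (c k) ^ 2 / (lam - s k) ^ 2 with hg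
  set b : ℝ := 1 - |c 0| with hbdef
  have hc0 : 0 < |c 0| := abs_pos.mpr (hcne 0)
  have hb1 : b < 1 := by rw [hbdef]; linarith
  have hc0le : c 0 ^ 2 ≤ 1 := by
    rw [← hc]; exact Finset.single_le_sum (fun k _ => sq_nonneg (c k)) (Finset.mem_univ 0)
  have hb0 : 0 ≤ b := by
    have h1 : |c 0| ≤ 1 := by nlinarith [sq_abs (c 0), abs_nonneg (c 0)]
    rw [hbdef]; linarith
  have hck2 : ∀ k, 0 < c k ^ 2 := fun k =>
    lt_of_le_of_ne (sq_nonneg _) (Ne.symm (pow_ne_zero 2 (hcne k)))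
  -- strict antitonicity on (-∞, 1)
  have hanti : StrictAntiOn g (Iio 1) := by
    intro a ha bb hbb hab
    simp only [hg, sub_lt_sub_iff_left]
    apply Finset.sum_lt_sum_of_nonempty Finset.univ_nonempty
    intro k _
    have hb' : bb - s k < 0 := sub_neg.mpr (lt_of_lt_of_le hbb (hsk k))
    have hsq : (bb - s k) ^ 2 < (a - s k) ^ 2 := by nlinarith
    exact div_lt_div_of_pos_left (hck2 k) (by nlinarith) hsq
  -- continuity
  have hcont : ContinuousOn g (Icc 0 b) := by
    apply ContinuousOn.sub continuousOn_const
    apply continuousOn_finset_sum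
    intro k _
    apply ContinuousOn.div continuousOn_const
    · exact ((continuousOn_id.sub continuousOn_const).pow 2)
    · intro x hx
      have : x - s k < 0 := by
        have := hsk k
        have := hx.2
        simp only [sub_neg]
        linarith
      exact pow_ne_zero 2 (ne_of_lt this)
  -- value at 0
  have hg0 : 0 ≤ g 0 := by
    simp only [hg, sub_nonneg]
    calc ∑ k, c k ^ 2 / ((0:ℝ) - s k) ^ 2 ≤ ∑ k, c k ^ 2 := by
          apply Finset.sum_le_sum
          intro k _
          have h1 : (1:ℝ) ≤ ((0:ℝ) - s k) ^ 2 := by nlinarith [hsk k]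
          exact div_le_self (sq_nonneg _) h1
      _ = 1 := hc
  -- value at b
  have hgb : g b < 0 := by
    have h0 : c 0 ^ 2 / (b - s 0) ^ 2 = 1 := by
      rw [hs0]
      have : (b - 1) ^ 2 = c 0 ^ 2 := by
        rw [hbdef]; rw [show (1 - |c 0| - 1) = -|c 0| by ring]
        rw [neg_pow, sq_abs]; ring
      rw [this, div_self (pow_ne_zero 2 (hcne 0))]
    have hsum : 1 < ∑ k, c k ^ 2 / (b - s k) ^ 2 := by
      rw [← h0]
      apply Finset.single_lt_sum (f := fun k => c k ^ 2 / (b - s k) ^ 2)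
        (i := (0 : Fin (M+2))) (j := 1) one_ne_zero (Finset.mem_univ _) (Finset.mem_univ _)
      · have h1 : b - s 1 < 0 := by
          have := hsk 1; simp only [sub_neg]; linarith
        have : 0 < (b - s 1) ^ 2 := lt_of_le_of_ne (sq_nonneg _) (Ne.symm (pow_ne_zero 2 (ne_of_lt h1)))
        exact div_pos (hck2 1) this
      · intro k _ _; positivity
    simp only [hg]; linarith
  -- bounds for any root
  have hbound : ∀ lam : ℝ, lam < 1 → g lam = 0 → 0 ≤ lam ∧ lam < b := by
    intro lam hlam1 hglam
    constructor
    · by_contra h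
      push_neg at h
      have := hanti (mem_Iio.mpr (h.trans one_pos)) (mem_Iio.mpr one_pos) h
      rw [hglam] at this
      linarith
    · by_contra h
      push_neg at h
      have hle : g lam ≤ g b := by
        rcases eq_or_lt_of_le h with h' | h'
        · rw [h']
        · exact (hanti (mem_Iio.mpr hb1) (mem_Iio.mpr hlam1) h').le
      rw [hglam] at hle
      linarith
  -- existence via IVT
  obtain ⟨lam, hlammem, hglam⟩ : ∃ lam ∈ Icc (0:ℝ) b, g lam = 0 := by
    have h0mem : (0:ℝ) ∈ Icc (g b) (g 0) := ⟨hgb.le, hg0⟩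
    have := intermediate_value_Icc' hb0 hcont h0mem
    obtain ⟨lam, hmem, heq⟩ := this
    exact ⟨lam, hmem, heq⟩
  have hlam1 : lam < 1 := lt_of_le_of_lt hlammem.2 hb1
  constructor
  · refine ⟨lam, ⟨hlam1, hglam⟩, ?_⟩
    intro y ⟨hy1, hgy⟩
    exact hanti.injOn (mem_Iio.mpr hy1) (mem_Iio.mpr hlam1)
      (by show g y = g lam; rw [hglam]; exact hgy)
  · intro l hl1 hgl
    exact hbound l hl1 hgl
end

section
/- Suppose additionally that c k ≠ 0 for every k. Then g(0) ≥ 0 and g(1 − |c 0|) ≤ 0. -/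
/-- Endpoint sign conditions from the proof of Lemma 2: with all `c k` nonzero,
`g(0) ≥ 0` and `g(1 - |c 0|) ≤ 0` for the secular function
`g(λ) = 1 - ∑ k, (c k)^2 / (λ - s k)^2`. -/
theorem secular_endpoint_signs (M : ℕ) (s c : Fin (M + 2) → ℝ)
    (hs : Monotone s) (hs0 : s 0 = 1)
    (hc : ∑ k, (c k) ^ 2 = 1) (hcne : ∀ k, c k ≠ 0) :
    0 ≤ 1 - ∑ k, (c k) ^ 2 / ((0 : ℝ) - s k) ^ 2 ∧
      1 - ∑ k, (c k) ^ 2 / ((1 - |c 0|) - s k) ^ 2 ≤ 0 := by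
  have hs1 : ∀ k : Fin (M + 2), 1 ≤ s k := by
    intro k
    rw [← hs0]; exact hs (Fin.zero_le k)
  constructor
  · have h1 : ∑ k, (c k) ^ 2 / ((0 : ℝ) - s k) ^ 2 ≤ ∑ k, (c k) ^ 2 := by
      apply Finset.sum_le_sum
      intro k _
      have h2 : (1 : ℝ) ≤ ((0 : ℝ) - s k) ^ 2 := by
        have := hs1 k; nlinarith
      calc (c k) ^ 2 / ((0 : ℝ) - s k) ^ 2 ≤ (c k) ^ 2 / 1 :=
            div_le_div_of_nonneg_left (sq_nonneg _) one_pos h2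
        _ = (c k) ^ 2 := by ring
    linarith [hc ▸ h1]
  · have hterm : (c 0) ^ 2 / ((1 - |c 0|) - s 0) ^ 2 = 1 := by
      rw [hs0]
      have : ((1 - |c 0|) - 1) ^ 2 = (c 0) ^ 2 := by
        rw [show (1 - |c 0|) - 1 = -|c 0| by ring]
        rw [neg_pow, sq_abs]; ring
      rw [this, div_self (pow_ne_zero 2 (hcne 0))]
    have h1 : (c 0) ^ 2 / ((1 - |c 0|) - s 0) ^ 2 ≤
        ∑ k, (c k) ^ 2 / ((1 - |c 0|) - s k) ^ 2 :=
      Finset.single_le_sum (f := fun k => (c k) ^ 2 / ((1 - |c 0|) - s k) ^ 2)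
        (fun k _ => by positivity) (Finset.mem_univ 0)
    linarith
end

section
/- Suppose additionally that c k ≠ 0 for every k. If λ₁ < 1 and λ₂ > 1 are both zeros of the secular function g (with λ₂ ≠ s k for all k), then f(λ₁) < f(λ₂), where f(λ) = λ + ∑ k, (c k)^2 / (λ − s k). In particular, among all critical values, the one attained at the zero of g below 1 is the minimum (Lemma 3). -/
/-- Lemma 3 of the paper: if `λ₁ < 1` and `λ₂ > 1` are both zeros of the secular
function `g(λ) = 1 - ∑ k, (c k)^2 / (λ - s k)^2` (with `λ₂` not a pole), then
`f(λ₁) < f(λ₂)` where `f(λ) = λ + ∑ k, (c k)^2 / (λ - s k)`; hence the critical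
value attained at the zero of `g` below `1` is the minimum. -/
theorem secular_min_at_root_below_one (M : ℕ) (s c : Fin (M + 2) → ℝ)
    (hs : Monotone s) (hs0 : s 0 = 1)
    (hc : ∑ k, (c k) ^ 2 = 1) (hcne : ∀ k, c k ≠ 0)
    (lam₁ lam₂ : ℝ) (h₁ : lam₁ < 1) (h₂ : 1 < lam₂)
    (hg₁ : 1 - ∑ k, (c k) ^ 2 / (lam₁ - s k) ^ 2 = 0)
    (hg₂ : 1 - ∑ k, (c k) ^ 2 / (lam₂ - s k) ^ 2 = 0)
    (hpole : ∀ k, lam₂ ≠ s k) :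
    lam₁ + ∑ k, (c k) ^ 2 / (lam₁ - s k) <
      lam₂ + ∑ k, (c k) ^ 2 / (lam₂ - s k) := by
  have hs1 : ∀ k, (1 : ℝ) ≤ s k := fun k => hs0 ▸ hs (Fin.zero_le k)
  have hd1 : ∀ k, lam₁ - s k < 0 := fun k => by have := hs1 k; linarith
  have hd1' : ∀ k, lam₁ - s k ≠ 0 := fun k => ne_of_lt (hd1 k)
  have hd2 : ∀ k, lam₂ - s k ≠ 0 := fun k => sub_ne_zero.mpr (hpole k)
  set a : Fin (M + 2) → ℝ := fun k => c k / (lam₁ - s k) with ha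
  set b : Fin (M + 2) → ℝ := fun k => c k / (lam₂ - s k) with hb
  have ha2 : ∑ k, (a k) ^ 2 = 1 := by
    have : ∑ k, (a k) ^ 2 = ∑ k, (c k) ^ 2 / (lam₁ - s k) ^ 2 :=
      Finset.sum_congr rfl fun k _ => by rw [ha]; simp [div_pow]
    linarith
  have hb2 : ∑ k, (b k) ^ 2 = 1 := by
    have : ∑ k, (b k) ^ 2 = ∑ k, (c k) ^ 2 / (lam₂ - s k) ^ 2 :=
      Finset.sum_congr rfl fun k _ => by rw [hb]; simp [div_pow]
    linarith
  have hT : ∑ k, a k * b k < 1 := by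
    have hlt : ∑ k, a k * b k < ∑ k, ((a k) ^ 2 + (b k) ^ 2) / 2 := by
      apply Finset.sum_lt_sum
      · intro k _; nlinarith [sq_nonneg (a k - b k)]
      · refine ⟨0, Finset.mem_univ _, ?_⟩
        have h0 : a 0 * b 0 < 0 := by
          have heq : a 0 * b 0 = c 0 * c 0 / ((lam₁ - s 0) * (lam₂ - s 0)) := by
            rw [ha, hb]; simp [div_mul_div_comm]
          rw [heq]
          apply div_neg_of_pos_of_neg
          · exact mul_self_pos.mpr (hcne 0)
          · have h1' : lam₁ - s 0 < 0 := hd1 0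
            have h2' : 0 < lam₂ - s 0 := by rw [hs0]; linarith
            exact mul_neg_of_neg_of_pos h1' h2'
        nlinarith [sq_nonneg (a 0), sq_nonneg (b 0)]
    have : ∑ k, ((a k) ^ 2 + (b k) ^ 2) / 2 = 1 := by
      rw [← Finset.sum_div, Finset.sum_add_distrib, ha2, hb2]; norm_num
    linarith
  have hkey : ∑ k, (c k) ^ 2 / (lam₂ - s k) =
      ∑ k, (c k) ^ 2 / (lam₁ - s k) + (lam₁ - lam₂) * ∑ k, a k * b k := by
    rw [Finset.mul_sum, ← Finset.sum_add_distrib]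
    refine Finset.sum_congr rfl fun k _ => ?_
    rw [ha, hb]
    field_simp [hd1' k, hd2 k]
    ring
  rw [hkey]
  nlinarith [hT]
end

section
/- Let K ≥ 1, let s, c : Fin K → ℝ be arbitrary, let λ ∈ ℝ, and let x*, x : Fin K → ℝ satisfy (s k − λ) * (x* k) = −(c k) for every k and ∑ k, (x k)^2 = ∑ k, (x* k)^2. Then F(x) − F(x*) = (1/2) ∑ k, (s k − λ) * (x k − x* k)^2, where F(x) = (1/2) ∑ k, s k * (x k)^2 + ∑ k, c k * x k. -/
/-!
Stationarity gives `c = -(s - λ) x*` coordinatewise, so each coordinate of `F(x) - F(x*)`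
equals `½ (s - λ)(x - x*)² + ½ λ (x² - x*²)`. Summing, the `λ`-term is `½ λ (‖x‖² - ‖x*‖²)`,
which vanishes on the sphere.
-/

open Finset

variable {ι : Type*} [Fintype ι]

noncomputable def diagQuadObjective (s c x : ι → ℝ) : ℝ :=
  (1 / 2 : ℝ) * ∑ k, s k * x k ^ 2 + ∑ k, c k * x k

theorem diagQuadObjective_sub_of_stationary {s c : ι → ℝ} {lam : ℝ} {xstar : ι → ℝ}
    (hstat : ∀ k, (s k - lam) * xstar k = -c k) (x : ι → ℝ) :
    diagQuadObjective s c x - diagQuadObjective s c xstar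
      = (1 / 2 : ℝ) * ∑ k, (s k - lam) * (x k - xstar k) ^ 2
        + lam / 2 * (∑ k, x k ^ 2 - ∑ k, xstar k ^ 2) := by
  have hcoord : ∀ k, (1 / 2 : ℝ) * s k * x k ^ 2 + c k * x k
      - ((1 / 2 : ℝ) * s k * xstar k ^ 2 + c k * xstar k)
      = (1 / 2 : ℝ) * ((s k - lam) * (x k - xstar k) ^ 2)
        + lam / 2 * (x k ^ 2 - xstar k ^ 2) := fun k => by
    linear_combination (x k - xstar k) * hstat k
  calc diagQuadObjective s c x - diagQuadObjective s c xstar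
      = ∑ k, ((1 / 2 : ℝ) * s k * x k ^ 2 + c k * x k
          - ((1 / 2 : ℝ) * s k * xstar k ^ 2 + c k * xstar k)) := by
        simp only [diagQuadObjective, mul_sum, sum_sub_distrib, sum_add_distrib, mul_assoc]
    _ = ∑ k, ((1 / 2 : ℝ) * ((s k - lam) * (x k - xstar k) ^ 2)
          + lam / 2 * (x k ^ 2 - xstar k ^ 2)) := sum_congr rfl fun k _ => hcoord k
    _ = _ := by rw [sum_add_distrib, ← mul_sum, ← mul_sum, sum_sub_distrib]

theorem scqp_objective_difference_general (K : ℕ)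
    (s c : Fin K → ℝ) (lam : ℝ) (xstar x : Fin K → ℝ)
    (hstat : ∀ k, (s k - lam) * xstar k = -(c k))
    (hnorm : ∑ k, (x k) ^ 2 = ∑ k, (xstar k) ^ 2) :
    ((1 / 2 : ℝ) * ∑ k, s k * (x k) ^ 2 + ∑ k, c k * x k)
        - ((1 / 2 : ℝ) * ∑ k, s k * (xstar k) ^ 2 + ∑ k, c k * xstar k)
      = (1 / 2 : ℝ) * ∑ k, (s k - lam) * (x k - xstar k) ^ 2 := by
  have h := diagQuadObjective_sub_of_stationary hstat x
  rwa [hnorm, sub_self, mul_zero, add_zero] at h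

/-- Difference of SCQP objective values at two points of equal norm, when `x*`
satisfies the first-order stationarity condition `(diag s - λ I) x* + c = 0`:
`F(x) - F(x*) = (1/2) ∑ k, (s k - λ) (x k - x* k)^2`, where
`F(x) = (1/2) ∑ k, s k (x k)^2 + ∑ k, c k * x k`. -/
theorem scqp_objective_difference (K : ℕ) (hK : 1 ≤ K)
    (s c : Fin K → ℝ) (lam : ℝ) (xstar x : Fin K → ℝ)
    (hstat : ∀ k, (s k - lam) * xstar k = -(c k))
    (hnorm : ∑ k, (x k) ^ 2 = ∑ k, (xstar k) ^ 2) :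
    ((1 / 2 : ℝ) * ∑ k, s k * (x k) ^ 2 + ∑ k, c k * x k)
        - ((1 / 2 : ℝ) * ∑ k, s k * (xstar k) ^ 2 + ∑ k, c k * xstar k)
      = (1 / 2 : ℝ) * ∑ k, (s k - lam) * (x k - xstar k) ^ 2 :=
  scqp_objective_difference_general K s c lam xstar x hstat hnorm
end

section
/- Suppose λ* < 1 satisfies g(λ*) = 0, and define x* : Fin K → ℝ by x* k = c k / (λ* − s k). Then ∑ k, (x* k)^2 = 1, and x* is a global minimiser of the SCQP: for every x : Fin K → ℝ with ∑ k, (x k)^2 = 1 one has F(x*) ≤ F(x). -/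
/-- Main claim for the spherically constrained quadratic program: if `λ* < 1` is a
zero of the secular function `g(λ) = 1 - ∑ k, (c k)^2/(λ - s k)^2`, then
`x* k = c k / (λ* - s k)` lies on the unit sphere and is a global minimiser of
`F(x) = (1/2) ∑ k, s k (x k)^2 + ∑ k, c k x k` over the unit sphere. -/
theorem scqp_global_minimiser_from_secular_root (M : ℕ) (s c : Fin (M + 2) → ℝ)
    (hs : Monotone s) (hs0 : s 0 = 1)
    (hc : ∑ k, (c k) ^ 2 = 1)
    (lam : ℝ) (hlam : lam < 1)
    (hg : 1 - ∑ k, (c k) ^ 2 / (lam - s k) ^ 2 = 0)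
    (xstar : Fin (M + 2) → ℝ) (hxstar : ∀ k, xstar k = c k / (lam - s k)) :
    ∑ k, (xstar k) ^ 2 = 1 ∧
      ∀ x : Fin (M + 2) → ℝ, ∑ k, (x k) ^ 2 = 1 →
        (1 / 2 : ℝ) * ∑ k, s k * (xstar k) ^ 2 + ∑ k, c k * xstar k ≤
          (1 / 2 : ℝ) * ∑ k, s k * (x k) ^ 2 + ∑ k, c k * x k := by
  have hsk : ∀ k, (1 : ℝ) ≤ s k := fun k => hs0 ▸ hs (Fin.zero_le k)
  have hne : ∀ k, lam - s k ≠ 0 := fun k =>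
    ne_of_lt (by have := hsk k; linarith)
  have hc' : ∀ k, c k = xstar k * (lam - s k) := fun k => by
    rw [hxstar k, div_mul_cancel₀ _ (hne k)]
  have h1 : ∑ k, xstar k ^ 2 = 1 := by
    have : ∀ k, xstar k ^ 2 = c k ^ 2 / (lam - s k) ^ 2 := fun k => by
      rw [hxstar k, div_pow]
    simp_rw [this]; linarith [hg]
  refine ⟨h1, fun x hx => ?_⟩
  have key : ∀ k, (1 / 2 : ℝ) * (s k * x k ^ 2) + c k * x k
      - ((1 / 2 : ℝ) * (s k * xstar k ^ 2) + c k * xstar k)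
      = (1 / 2 : ℝ) * ((s k - lam) * (x k - xstar k) ^ 2)
        + (lam / 2) * (x k ^ 2 - xstar k ^ 2) := by
    intro k; rw [hc' k]; ring
  have hnn : 0 ≤ ∑ k, (1 / 2 : ℝ) * ((s k - lam) * (x k - xstar k) ^ 2) :=
    Finset.sum_nonneg fun k _ => by
      have := hsk k
      nlinarith [sq_nonneg (x k - xstar k)]
  have hsum : ∑ k, ((1 / 2 : ℝ) * (s k * x k ^ 2) + c k * x k
      - ((1 / 2 : ℝ) * (s k * xstar k ^ 2) + c k * xstar k))
      = ∑ k, ((1 / 2 : ℝ) * ((s k - lam) * (x k - xstar k) ^ 2)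
        + (lam / 2) * (x k ^ 2 - xstar k ^ 2)) :=
    Finset.sum_congr rfl fun k _ => key k
  have h2 : ∑ k, (lam / 2) * (x k ^ 2 - xstar k ^ 2) = 0 := by
    rw [← Finset.mul_sum, Finset.sum_sub_distrib, hx, h1]; ring
  rw [Finset.sum_add_distrib, h2, add_zero, Finset.sum_sub_distrib,
    Finset.sum_add_distrib, Finset.sum_add_distrib, ← Finset.mul_sum,
    ← Finset.mul_sum] at hsum
  linarith [hnn, hsum]
end

section
/- Let d ≥ 0 and let c ∈ ℝ satisfy 0 < c^2 < 1. Then the degree-4 polynomial p(t) = t^4 + 2*d*t^3 + (d^2 − 1)*t^2 − 2*c^2*d*t − c^2*d^2 has exactly one root in the closed interval [|c|, 1]. -/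
/-- Uniqueness helper: two roots in the interval with `x < y` give a contradiction. -/
lemma quartic_no_two_roots (d c x y : ℝ) (hd : 0 ≤ d) (hc0 : 0 < c ^ 2)
    (hcx : |c| ≤ x) (hy1 : y ≤ 1) (hxy : x < y)
    (hx : x ^ 4 + 2 * d * x ^ 3 + (d ^ 2 - 1) * x ^ 2
        - 2 * c ^ 2 * d * x - c ^ 2 * d ^ 2 = 0)
    (hyr : y ^ 4 + 2 * d * y ^ 3 + (d ^ 2 - 1) * y ^ 2
        - 2 * c ^ 2 * d * y - c ^ 2 * d ^ 2 = 0) : False := by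
  have hcne : c ≠ 0 := by intro h; simp [h] at hc0
  have habs : 0 < |c| := abs_pos.mpr hcne
  have hx0 : 0 < x := lt_of_lt_of_le habs hcx
  have hy0 : 0 < y := lt_trans hx0 hxy
  have hx2 : c ^ 2 ≤ x ^ 2 := by
    have := sq_abs c
    nlinarith [abs_nonneg c]
  have eq1 : (x ^ 2 - c ^ 2) * (x + d) ^ 2 = (1 - c ^ 2) * x ^ 2 := by
    linear_combination hx
  have eq2 : (y ^ 2 - c ^ 2) * (y + d) ^ 2 = (1 - c ^ 2) * y ^ 2 := by
    linear_combination hyr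
  have h1 : (x ^ 2 - c ^ 2) * y ^ 2 < (y ^ 2 - c ^ 2) * x ^ 2 := by
    have hy2 : x ^ 2 < y ^ 2 := by nlinarith
    nlinarith [mul_pos hc0 (sub_pos.mpr hy2)]
  have hxd : 0 < (x + d) ^ 2 := by positivity
  have h2 : (x ^ 2 - c ^ 2) * (x + d) ^ 2 * y ^ 2
      < (y ^ 2 - c ^ 2) * x ^ 2 * (x + d) ^ 2 := by
    nlinarith [mul_lt_mul_of_pos_right h1 hxd]
  have hB : 0 ≤ (y ^ 2 - c ^ 2) * x ^ 2 := by nlinarith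
  have h3 : (y ^ 2 - c ^ 2) * x ^ 2 * (x + d) ^ 2
      ≤ (y ^ 2 - c ^ 2) * x ^ 2 * (y + d) ^ 2 := by
    have hsq : (x + d) ^ 2 ≤ (y + d) ^ 2 := by nlinarith
    exact mul_le_mul_of_nonneg_left hsq hB
  have e1 : (x ^ 2 - c ^ 2) * (x + d) ^ 2 * y ^ 2 = (1 - c ^ 2) * x ^ 2 * y ^ 2 := by
    linear_combination y ^ 2 * eq1
  have e2 : (y ^ 2 - c ^ 2) * x ^ 2 * (y + d) ^ 2 = (1 - c ^ 2) * x ^ 2 * y ^ 2 := by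
    linear_combination x ^ 2 * eq2
  linarith

/-- Lemma 4 (key claim): for `d ≥ 0` and `0 < c² < 1`, the quartic
`p(t) = t⁴ + 2dt³ + (d²-1)t² - 2c²dt - c²d²` has exactly one root in `[|c|, 1]`. -/
theorem quartic_unique_root (d c : ℝ) (hd : 0 ≤ d) (hc0 : 0 < c ^ 2) (hc1 : c ^ 2 < 1) :
    ∃! t : ℝ, t ∈ Set.Icc |c| 1 ∧
      t ^ 4 + 2 * d * t ^ 3 + (d ^ 2 - 1) * t ^ 2
        - 2 * c ^ 2 * d * t - c ^ 2 * d ^ 2 = 0 := by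
  set f : ℝ → ℝ := fun t => t ^ 4 + 2 * d * t ^ 3 + (d ^ 2 - 1) * t ^ 2
        - 2 * c ^ 2 * d * t - c ^ 2 * d ^ 2 with hf
  have hcont : Continuous f := by fun_prop
  have habs1 : |c| ≤ 1 := by
    have := sq_abs c
    nlinarith [abs_nonneg c]
  have ha2 : |c| ^ 2 = c ^ 2 := sq_abs c
  have hfa : f |c| = c ^ 2 * (c ^ 2 - 1) := by
    simp only [hf]
    linear_combination (|c| ^ 2 + c ^ 2 + 2 * d * |c| + d ^ 2 - 1) * ha2
  have hf1 : f 1 = (1 - c ^ 2) * (2 * d + d ^ 2) := by simp only [hf]; ring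
  have h0mem : (0 : ℝ) ∈ Set.Icc (f |c|) (f 1) := by
    constructor
    · rw [hfa]; nlinarith
    · rw [hf1]; nlinarith
  obtain ⟨t, htmem, ht⟩ := intermediate_value_Icc habs1 hcont.continuousOn h0mem
  refine ⟨t, ⟨htmem, ht⟩, ?_⟩
  rintro y ⟨hymem, hy⟩
  rcases lt_trichotomy y t with h | h | h
  · exact absurd (quartic_no_two_roots d c y t hd hc0 hymem.1 htmem.2 h hy ht) id
  · exact h
  · exact absurd (quartic_no_two_roots d c t y hd hc0 htmem.1 hymem.2 h ht hy) id
end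

section
/- Suppose additionally that c k ≠ 0 for every k. Set d₁ = s 1 − 1 and d₂ = s (K−1) − 1, and let p_d(t) = t^4 + 2*d*t^3 + (d^2 − 1)*t^2 − 2*(c 0)^2*d*t − (c 0)^2*d^2. If t₁ ∈ [|c 0|, 1] satisfies p_{d₁}(t₁) = 0, if t₂ ∈ [|c 0|, 1] satisfies p_{d₂}(t₂) = 0, and if λ* < 1 satisfies g(λ*) = 0, then 1 − t₁ ≤ λ* ≤ 1 − t₂. -/
/-- Strict antitonicity of the two-term secular surrogate. -/
lemma secular_aux_f_lt (p e d a b : ℝ) (hp : 0 < p) (he : 0 ≤ e) (hd : 0 ≤ d)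
    (ha : 0 < a) (hab : a < b) :
    p / b ^ 2 + e / (b + d) ^ 2 < p / a ^ 2 + e / (a + d) ^ 2 := by
  have hb : 0 < b := ha.trans hab
  have h1 : p / b ^ 2 < p / a ^ 2 := by
    apply div_lt_div_of_pos_left hp (by positivity)
    nlinarith
  have h2 : e / (b + d) ^ 2 ≤ e / (a + d) ^ 2 := by
    apply div_le_div_of_nonneg_left he (by positivity)
    nlinarith
  linarith

/-- A positive root of the quartic gives a root of the surrogate. -/
lemma secular_aux_root (p e d x : ℝ) (hx : 0 < x) (hd : 0 ≤ d) (hpe : p + e = 1)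
    (h : x ^ 4 + 2 * d * x ^ 3 + (d ^ 2 - 1) * x ^ 2 - 2 * p * d * x - p * d ^ 2 = 0) :
    p / x ^ 2 + e / (x + d) ^ 2 = 1 := by
  have hx2 : x ^ 2 ≠ 0 := by positivity
  have hxd : (x + d) ^ 2 ≠ 0 := by positivity
  rw [div_add_div _ _ hx2 hxd, div_eq_one_iff_eq (mul_ne_zero hx2 hxd)]
  linear_combination x ^ 2 * hpe - h

/-- Lemma 4 of the paper: with `d₁ = s 1 - 1` and `d₂ = s (K-1) - 1`, if `t₁` and
`t₂` are the roots in `[|c 0|, 1]` of the quartics `p_{d₁}` and `p_{d₂}`, and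
`λ* < 1` is a zero of the secular function, then `1 - t₁ ≤ λ* ≤ 1 - t₂`. -/
theorem secular_root_quartic_bounds (M : ℕ) (s c : Fin (M + 2) → ℝ)
    (hs : Monotone s) (hs0 : s 0 = 1)
    (hc : ∑ k, (c k) ^ 2 = 1) (hcne : ∀ k, c k ≠ 0)
    (t₁ t₂ lam : ℝ)
    (ht₁mem : t₁ ∈ Set.Icc |c 0| 1)
    (ht₁ : t₁ ^ 4 + 2 * (s 1 - 1) * t₁ ^ 3 + ((s 1 - 1) ^ 2 - 1) * t₁ ^ 2
        - 2 * (c 0) ^ 2 * (s 1 - 1) * t₁ - (c 0) ^ 2 * (s 1 - 1) ^ 2 = 0)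
    (ht₂mem : t₂ ∈ Set.Icc |c 0| 1)
    (ht₂ : t₂ ^ 4 + 2 * (s (Fin.last (M + 1)) - 1) * t₂ ^ 3
        + ((s (Fin.last (M + 1)) - 1) ^ 2 - 1) * t₂ ^ 2
        - 2 * (c 0) ^ 2 * (s (Fin.last (M + 1)) - 1) * t₂
        - (c 0) ^ 2 * (s (Fin.last (M + 1)) - 1) ^ 2 = 0)
    (hlam : lam < 1)
    (hg : 1 - ∑ k, (c k) ^ 2 / (lam - s k) ^ 2 = 0) :
    1 - t₁ ≤ lam ∧ lam ≤ 1 - t₂ := by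
  set t : ℝ := 1 - lam with htdef
  have ht : 0 < t := by rw [htdef]; linarith only [hlam]
  set d₁ : ℝ := s 1 - 1 with hd1def
  set d₂ : ℝ := s (Fin.last (M + 1)) - 1 with hd2def
  have hs01 : s 0 ≤ s 1 := hs (Fin.zero_le 1)
  have hs1ge : 1 ≤ s 1 := by rw [← hs0]; exact hs01
  have h1last : s 1 ≤ s (Fin.last (M + 1)) := hs (Fin.le_last 1)
  have hd1 : 0 ≤ d₁ := by rw [hd1def]; linarith only [hs1ge]
  have hd2 : 0 ≤ d₂ := by rw [hd2def]; linarith only [hs1ge, h1last]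
  have hc0 : 0 < (c 0) ^ 2 := by have h0 := hcne 0; positivity
  set e : ℝ := ∑ i : Fin (M + 1), (c i.succ) ^ 2 with hedef
  have he : 0 ≤ e := Finset.sum_nonneg fun i _ => sq_nonneg _
  have hce : (c 0) ^ 2 + e = 1 := by
    rw [hedef, ← Fin.sum_univ_succ (fun k => (c k) ^ 2)]; exact hc
  have habs : 0 < |c 0| := abs_pos.mpr (hcne 0)
  have ht₁pos : 0 < t₁ := lt_of_lt_of_le habs ht₁mem.1
  have ht₂pos : 0 < t₂ := lt_of_lt_of_le habs ht₂mem.1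
  -- split the secular sum
  have hsum : (c 0) ^ 2 / t ^ 2 + ∑ i : Fin (M + 1),
      (c i.succ) ^ 2 / (lam - s i.succ) ^ 2 = 1 := by
    have h0 : (lam - s 0) ^ 2 = t ^ 2 := by rw [hs0, htdef]; ring
    have hsplit := Fin.sum_univ_succ (fun k => (c k) ^ 2 / (lam - s k) ^ 2)
    rw [hsplit, h0] at hg
    linarith only [hg]
  -- index facts
  have hsk1 : ∀ i : Fin (M + 1), s 1 ≤ s i.succ := by
    intro i
    apply hs
    rw [← Fin.succ_zero_eq_one]
    exact Fin.succ_le_succ_iff.mpr (Fin.zero_le i)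
  have hsklast : ∀ i : Fin (M + 1), s i.succ ≤ s (Fin.last (M + 1)) := fun i =>
    hs (Fin.le_last _)
  have hsq : ∀ x : ℝ, (lam - x) ^ 2 = (t + (x - 1)) ^ 2 := by
    intro x; rw [htdef]; ring
  -- termwise bounds
  have hterm1 : ∀ i : Fin (M + 1),
      (c i.succ) ^ 2 / (lam - s i.succ) ^ 2 ≤ (c i.succ) ^ 2 / (t + d₁) ^ 2 := by
    intro i
    apply div_le_div_of_nonneg_left (sq_nonneg _) (by positivity)
    rw [hsq (s i.succ)]
    have h1 : d₁ ≤ s i.succ - 1 := by rw [hd1def]; linarith only [hsk1 i]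
    nlinarith only [h1, hd1, ht]
  have hterm2 : ∀ i : Fin (M + 1),
      (c i.succ) ^ 2 / (t + d₂) ^ 2 ≤ (c i.succ) ^ 2 / (lam - s i.succ) ^ 2 := by
    intro i
    have h1 : d₁ ≤ s i.succ - 1 := by rw [hd1def]; linarith only [hsk1 i]
    have h2 : s i.succ - 1 ≤ d₂ := by rw [hd2def]; linarith only [hsklast i]
    have hpos : 0 < (lam - s i.succ) ^ 2 := by
      rw [hsq (s i.succ)]
      nlinarith only [h1, hd1, ht]
    apply div_le_div_of_nonneg_left (sq_nonneg _) hpos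
    rw [hsq (s i.succ)]
    nlinarith only [h1, h2, hd1, ht]
  -- aggregated bounds
  have hineq1 : (1:ℝ) ≤ (c 0) ^ 2 / t ^ 2 + e / (t + d₁) ^ 2 := by
    have hb : ∑ i : Fin (M + 1), (c i.succ) ^ 2 / (lam - s i.succ) ^ 2
        ≤ e / (t + d₁) ^ 2 := by
      rw [hedef, Finset.sum_div]
      exact Finset.sum_le_sum fun i _ => hterm1 i
    linarith only [hsum, hb]
  have hineq2 : (c 0) ^ 2 / t ^ 2 + e / (t + d₂) ^ 2 ≤ 1 := by
    have hb : e / (t + d₂) ^ 2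
        ≤ ∑ i : Fin (M + 1), (c i.succ) ^ 2 / (lam - s i.succ) ^ 2 := by
      rw [hedef, Finset.sum_div]
      exact Finset.sum_le_sum fun i _ => hterm2 i
    linarith only [hsum, hb]
  -- roots of the quartics
  have hroot1 : (c 0) ^ 2 / t₁ ^ 2 + e / (t₁ + d₁) ^ 2 = 1 :=
    secular_aux_root _ _ _ _ ht₁pos hd1 hce ht₁
  have hroot2 : (c 0) ^ 2 / t₂ ^ 2 + e / (t₂ + d₂) ^ 2 = 1 :=
    secular_aux_root _ _ _ _ ht₂pos hd2 hce ht₂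
  constructor
  · by_contra h
    push_neg at h
    have h' : t₁ < t := by rw [htdef]; linarith only [h]
    have hlt := secular_aux_f_lt ((c 0) ^ 2) e d₁ t₁ t hc0 he hd1 ht₁pos h'
    linarith only [hlt, hroot1, hineq1]
  · by_contra h
    push_neg at h
    have h' : t < t₂ := by rw [htdef]; linarith only [h]
    have hlt := secular_aux_f_lt ((c 0) ^ 2) e d₂ t t₂ hc0 he hd2 ht h'
    linarith only [hlt, hroot2, hineq2]
end

section
/- Set d₁ = s 1 − 1 and d₂ = s (K−1) − 1. Then for every real t > 0: 1 − (c 0)^2/t^2 − (1 − (c 0)^2)/(d₁ + t)^2 ≤ g(1 − t) ≤ 1 − (c 0)^2/t^2 − (1 − (c 0)^2)/(d₂ + t)^2. -/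
/-- From the proof of Lemma 4: with `d₁ = s 1 - 1` and `d₂ = s (K-1) - 1`, for every
`t > 0` the secular function satisfies
`1 - (c 0)²/t² - (1 - (c 0)²)/(d₁ + t)² ≤ g(1 - t) ≤ 1 - (c 0)²/t² - (1 - (c 0)²)/(d₂ + t)²`. -/
theorem secular_shift_bounds (M : ℕ) (s c : Fin (M + 2) → ℝ)
    (hs : Monotone s) (hs0 : s 0 = 1)
    (hc : ∑ k, (c k) ^ 2 = 1) :
    ∀ t : ℝ, 0 < t →
      (1 - (c 0) ^ 2 / t ^ 2 - (1 - (c 0) ^ 2) / ((s 1 - 1) + t) ^ 2 ≤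
          1 - ∑ k, (c k) ^ 2 / ((1 - t) - s k) ^ 2) ∧
        (1 - ∑ k, (c k) ^ 2 / ((1 - t) - s k) ^ 2 ≤
          1 - (c 0) ^ 2 / t ^ 2
            - (1 - (c 0) ^ 2) / ((s (Fin.last (M + 1)) - 1) + t) ^ 2) := by
  intro t ht
  have h01 : (0 : Fin (M + 2)) ≤ 1 := by
    rw [Fin.le_def]; simp
  have hs1 : (1 : ℝ) ≤ s 1 := hs0 ▸ hs h01
  have hsl1 : s 1 ≤ s (Fin.last (M + 1)) := hs (Fin.le_last 1)
  have hd1 : 0 < (s 1 - 1) + t := by linarith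
  have hd2 : 0 < (s (Fin.last (M + 1)) - 1) + t := by linarith
  have key : ∀ i : Fin (M + 1),
      ((c i.succ) ^ 2 / ((s (Fin.last (M + 1)) - 1) + t) ^ 2 ≤
        (c i.succ) ^ 2 / ((1 - t) - s i.succ) ^ 2) ∧
      ((c i.succ) ^ 2 / ((1 - t) - s i.succ) ^ 2 ≤
        (c i.succ) ^ 2 / ((s 1 - 1) + t) ^ 2) := by
    intro i
    have h1i : (1 : Fin (M + 2)) ≤ i.succ := by
      rw [Fin.le_def]
      have : ((1 : Fin (M + 2)) : ℕ) = 1 := rfl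
      simp [this, Fin.val_succ]
    have hl : s 1 ≤ s i.succ := hs h1i
    have hr : s i.succ ≤ s (Fin.last (M + 1)) := hs (Fin.le_last _)
    have hpos : 0 < s i.succ - 1 + t := by linarith
    have heq : ((1 - t) - s i.succ) ^ 2 = (s i.succ - 1 + t) ^ 2 := by ring
    rw [heq]
    constructor
    · gcongr
    · gcongr
  have hsum : (∑ k, (c k) ^ 2 / ((1 - t) - s k) ^ 2) =
      (c 0) ^ 2 / t ^ 2 + ∑ i : Fin (M + 1), (c i.succ) ^ 2 / ((1 - t) - s i.succ) ^ 2 := by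
    rw [Fin.sum_univ_succ]
    congr 1
    rw [hs0]
    ring_nf
  have hcs : (∑ i : Fin (M + 1), (c i.succ) ^ 2) = 1 - (c 0) ^ 2 := by
    rw [Fin.sum_univ_succ] at hc; linarith
  have hlb : (1 - (c 0) ^ 2) / ((s (Fin.last (M + 1)) - 1) + t) ^ 2 ≤
      ∑ i : Fin (M + 1), (c i.succ) ^ 2 / ((1 - t) - s i.succ) ^ 2 := by
    calc (1 - (c 0) ^ 2) / ((s (Fin.last (M + 1)) - 1) + t) ^ 2
        = ∑ i : Fin (M + 1), (c i.succ) ^ 2 / ((s (Fin.last (M + 1)) - 1) + t) ^ 2 := by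
          rw [← Finset.sum_div, hcs]
      _ ≤ _ := Finset.sum_le_sum fun i _ => (key i).1
  have hub : (∑ i : Fin (M + 1), (c i.succ) ^ 2 / ((1 - t) - s i.succ) ^ 2) ≤
      (1 - (c 0) ^ 2) / ((s 1 - 1) + t) ^ 2 := by
    calc (∑ i : Fin (M + 1), (c i.succ) ^ 2 / ((1 - t) - s i.succ) ^ 2)
        ≤ ∑ i : Fin (M + 1), (c i.succ) ^ 2 / ((s 1 - 1) + t) ^ 2 :=
          Finset.sum_le_sum fun i _ => (key i).2
      _ = (1 - (c 0) ^ 2) / ((s 1 - 1) + t) ^ 2 := by rw [← Finset.sum_div, hcs]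
  constructor <;> rw [hsum] <;> linarith
end

section
/- For every L with 1 ≤ L ≤ K − 1 and every real λ < 1, writing c̃² = ∑_{k ≥ L} (c k)^2, one has f_l^L(λ) ≤ g(λ) ≤ f_u^L(λ), where f_l^L(λ) = 1 − ∑_{k < L} (c k)^2/(s k − λ)^2 − c̃²/(s L − λ)^2 and f_u^L(λ) = 1 − ∑_{k < L} (c k)^2/(s k − λ)^2 − c̃²/(s (K−1) − λ)^2. -/
/-- From the proof of Lemma 5: the truncated secular functions bracket `g` pointwise:
for `1 ≤ L ≤ K - 1` and `λ < 1`, `f_l^L(λ) ≤ g(λ) ≤ f_u^L(λ)`, where the truncated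
functions keep the first `L` rational terms of `g` and lump the remaining mass
`c̃² = ∑_{k ≥ L} (c k)²` at the pole `s L` (lower bound) or `s (K-1)` (upper bound). -/
theorem truncated_secular_pointwise_bounds (M : ℕ) (s c : Fin (M + 2) → ℝ)
    (hs : Monotone s) (hs0 : s 0 = 1)
    (hc : ∑ k, (c k) ^ 2 = 1)
    (L : ℕ) (hL1 : 1 ≤ L) (hL2 : L ≤ M + 1)
    (lam : ℝ) (hlam : lam < 1) :
    (1 - (∑ k ∈ Finset.univ.filter (fun k : Fin (M + 2) => (k : ℕ) < L),
            (c k) ^ 2 / (s k - lam) ^ 2)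
        - (∑ k ∈ Finset.univ.filter (fun k : Fin (M + 2) => L ≤ (k : ℕ)), (c k) ^ 2)
            / (s ⟨L, by omega⟩ - lam) ^ 2
      ≤ 1 - ∑ k, (c k) ^ 2 / (lam - s k) ^ 2) ∧
    (1 - ∑ k, (c k) ^ 2 / (lam - s k) ^ 2
      ≤ 1 - (∑ k ∈ Finset.univ.filter (fun k : Fin (M + 2) => (k : ℕ) < L),
            (c k) ^ 2 / (s k - lam) ^ 2)
        - (∑ k ∈ Finset.univ.filter (fun k : Fin (M + 2) => L ≤ (k : ℕ)), (c k) ^ 2)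
            / (s (Fin.last (M + 1)) - lam) ^ 2) := by
  have h1 : ∀ k : Fin (M + 2), lam < s k := by
    intro k
    calc lam < 1 := hlam
      _ = s 0 := hs0.symm
      _ ≤ s k := hs (Fin.zero_le k)
  have heq : ∀ k : Fin (M + 2), (c k) ^ 2 / (lam - s k) ^ 2
      = (c k) ^ 2 / (s k - lam) ^ 2 := by
    intro k; congr 1; ring
  have hsplit : ∑ k, (c k) ^ 2 / (s k - lam) ^ 2
      = (∑ k ∈ Finset.univ.filter (fun k : Fin (M + 2) => (k : ℕ) < L),
          (c k) ^ 2 / (s k - lam) ^ 2)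
        + ∑ k ∈ Finset.univ.filter (fun k : Fin (M + 2) => L ≤ (k : ℕ)),
          (c k) ^ 2 / (s k - lam) ^ 2 := by
    rw [← Finset.sum_filter_add_sum_filter_not Finset.univ
        (fun k : Fin (M + 2) => (k : ℕ) < L)]
    congr 1
    apply Finset.sum_congr _ (fun _ _ => rfl)
    ext k
    simp only [Finset.mem_filter, Finset.mem_univ, true_and, not_lt]
  have hposL : 0 < s ⟨L, by omega⟩ - lam := by linarith [h1 ⟨L, by omega⟩]
  have hposLast : 0 < s (Fin.last (M + 1)) - lam := by linarith [h1 (Fin.last (M + 1))]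
  have hlow : ∑ k ∈ Finset.univ.filter (fun k : Fin (M + 2) => L ≤ (k : ℕ)),
      (c k) ^ 2 / (s k - lam) ^ 2
      ≤ (∑ k ∈ Finset.univ.filter (fun k : Fin (M + 2) => L ≤ (k : ℕ)), (c k) ^ 2)
          / (s ⟨L, by omega⟩ - lam) ^ 2 := by
    rw [Finset.sum_div]
    apply Finset.sum_le_sum
    intro k hk
    have hk' : L ≤ (k : ℕ) := by
      simpa using (Finset.mem_filter.mp hk).2
    have hle : s ⟨L, by omega⟩ ≤ s k := hs (by exact hk')
    exact div_le_div_of_nonneg_left (sq_nonneg _) (pow_pos hposL 2)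
      (pow_le_pow_left₀ hposL.le (by linarith) 2)
  have hhigh : (∑ k ∈ Finset.univ.filter (fun k : Fin (M + 2) => L ≤ (k : ℕ)), (c k) ^ 2)
          / (s (Fin.last (M + 1)) - lam) ^ 2
      ≤ ∑ k ∈ Finset.univ.filter (fun k : Fin (M + 2) => L ≤ (k : ℕ)),
          (c k) ^ 2 / (s k - lam) ^ 2 := by
    rw [Finset.sum_div]
    apply Finset.sum_le_sum
    intro k hk
    have hposk : 0 < s k - lam := by linarith [h1 k]
    have hle : s k ≤ s (Fin.last (M + 1)) := hs (Fin.le_last k)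
    exact div_le_div_of_nonneg_left (sq_nonneg _) (pow_pos hposk 2)
      (pow_le_pow_left₀ hposk.le (by linarith) 2)
  simp only [heq, hsplit]
  constructor <;> linarith
end

section
/- For all L, L' with 1 ≤ L ≤ L' ≤ K − 1 and every real λ < 1, one has f_l^L(λ) ≤ f_l^{L'}(λ) and f_u^{L'}(λ) ≤ f_u^L(λ). -/
/-- Monotonicity of the truncated secular functions in the truncation level:
for `1 ≤ L ≤ L' ≤ K - 1` and `λ < 1`, `f_l^L(λ) ≤ f_l^{L'}(λ)` and
`f_u^{L'}(λ) ≤ f_u^L(λ)`. -/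
theorem truncated_secular_monotone_in_level (M : ℕ) (s c : Fin (M + 2) → ℝ)
    (hs : Monotone s) (hs0 : s 0 = 1)
    (hc : ∑ k, (c k) ^ 2 = 1)
    (L L' : ℕ) (hL1 : 1 ≤ L) (hLL' : L ≤ L') (hL2 : L' ≤ M + 1)
    (lam : ℝ) (hlam : lam < 1) :
    (1 - (∑ k ∈ Finset.univ.filter (fun k : Fin (M + 2) => (k : ℕ) < L),
            (c k) ^ 2 / (s k - lam) ^ 2)
        - (∑ k ∈ Finset.univ.filter (fun k : Fin (M + 2) => L ≤ (k : ℕ)), (c k) ^ 2)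
            / (s ⟨L, by omega⟩ - lam) ^ 2
      ≤ 1 - (∑ k ∈ Finset.univ.filter (fun k : Fin (M + 2) => (k : ℕ) < L'),
            (c k) ^ 2 / (s k - lam) ^ 2)
        - (∑ k ∈ Finset.univ.filter (fun k : Fin (M + 2) => L' ≤ (k : ℕ)), (c k) ^ 2)
            / (s ⟨L', by omega⟩ - lam) ^ 2) ∧
    (1 - (∑ k ∈ Finset.univ.filter (fun k : Fin (M + 2) => (k : ℕ) < L'),
            (c k) ^ 2 / (s k - lam) ^ 2)
        - (∑ k ∈ Finset.univ.filter (fun k : Fin (M + 2) => L' ≤ (k : ℕ)), (c k) ^ 2)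
            / (s (Fin.last (M + 1)) - lam) ^ 2
      ≤ 1 - (∑ k ∈ Finset.univ.filter (fun k : Fin (M + 2) => (k : ℕ) < L),
            (c k) ^ 2 / (s k - lam) ^ 2)
        - (∑ k ∈ Finset.univ.filter (fun k : Fin (M + 2) => L ≤ (k : ℕ)), (c k) ^ 2)
            / (s (Fin.last (M + 1)) - lam) ^ 2) := by
  have hpos : ∀ k : Fin (M + 2), 0 < s k - lam := by
    intro k
    have h0 : s 0 ≤ s k := hs (Fin.zero_le k)
    rw [hs0] at h0
    linarith
  have hle : ∀ {j k : Fin (M + 2)}, (j : ℕ) ≤ (k : ℕ) → s j ≤ s k := by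
    intro j k h
    exact hs (Fin.le_def.mpr h)
  have hdiv : ∀ (k : Fin (M + 2)) (x y : ℝ), 0 < x - lam → x ≤ y →
      (c k) ^ 2 / (y - lam) ^ 2 ≤ (c k) ^ 2 / (x - lam) ^ 2 := by
    intro k x y hx hxy
    have hx2 : 0 < (x - lam) ^ 2 := pow_pos hx 2
    have hxy2 : (x - lam) ^ 2 ≤ (y - lam) ^ 2 := by
      apply pow_le_pow_left₀ (le_of_lt hx) (by linarith)
    exact div_le_div_of_nonneg_left (sq_nonneg _) hx2 hxy2
  have key : ∀ (N : ℕ) (d : ℝ),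
      (∑ k ∈ Finset.univ.filter (fun k : Fin (M + 2) => (k : ℕ) < N),
          (c k) ^ 2 / (s k - lam) ^ 2)
        + (∑ k ∈ Finset.univ.filter (fun k : Fin (M + 2) => N ≤ (k : ℕ)), (c k) ^ 2) / d
      = ∑ k : Fin (M + 2),
          (if (k : ℕ) < N then (c k) ^ 2 / (s k - lam) ^ 2 else (c k) ^ 2 / d) := by
    intro N d
    rw [Finset.sum_div, Finset.sum_filter, Finset.sum_filter, ← Finset.sum_add_distrib]
    refine Finset.sum_congr rfl fun k _ => ?_
    by_cases h : (k : ℕ) < N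
    · have h' : ¬ N ≤ (k : ℕ) := by omega
      simp [h, h']
    · have h' : N ≤ (k : ℕ) := by omega
      simp [h, h']
  constructor
  · rw [sub_sub, sub_sub, sub_le_sub_iff_left, key L _, key L' _]
    refine Finset.sum_le_sum fun k _ => ?_
    by_cases h1 : (k : ℕ) < L
    · simp [h1, show (k : ℕ) < L' by omega]
    · by_cases h2 : (k : ℕ) < L'
      · simp only [h1, h2, if_true, if_false]
        exact hdiv k _ _ (hpos _) (hle (by omega : (L : ℕ) ≤ ((k : Fin (M + 2)) : ℕ)))
      · simp only [h1, h2, if_false]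
        exact hdiv k _ _ (hpos _) (hle (by simp; omega))
  · rw [sub_sub, sub_sub, sub_le_sub_iff_left, key L _, key L' _]
    refine Finset.sum_le_sum fun k _ => ?_
    by_cases h1 : (k : ℕ) < L
    · simp [h1, show (k : ℕ) < L' by omega]
    · by_cases h2 : (k : ℕ) < L'
      · simp only [h1, h2, if_true, if_false]
        exact hdiv k _ _ (hpos _) (hle (by simp [Fin.last]; omega))
      · simp [h1, h2]
end

section
/- Suppose there is an index n ≠ 0 such that c n = 0 while c k ≠ 0 for every k ≠ n. Then every global minimiser x* of the SCQP objective F over the unit sphere {x : ∑ k, (x k)^2 = 1} satisfies x* n = 0. -/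
/-- Lemma 6 of the paper: if `c n = 0` for a single index `n ≠ 0` while all other
coefficients are nonzero, then every global minimiser `x*` of the SCQP objective
`F(x) = (1/2) ∑ k, s k (x k)^2 + ∑ k, c k x k` over the unit sphere satisfies
`x* n = 0`. -/
theorem scqp_zero_coefficient_coordinate_vanishes (M : ℕ) (s c : Fin (M + 2) → ℝ)
    (hs : Monotone s) (hs0 : s 0 = 1)
    (hc : ∑ k, (c k) ^ 2 = 1)
    (n : Fin (M + 2)) (hn : n ≠ 0) (hcn : c n = 0)
    (hck : ∀ k, k ≠ n → c k ≠ 0) :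
    ∀ xstar : Fin (M + 2) → ℝ, ∑ k, (xstar k) ^ 2 = 1 →
      (∀ x : Fin (M + 2) → ℝ, ∑ k, (x k) ^ 2 = 1 →
        (1 / 2 : ℝ) * ∑ k, s k * (xstar k) ^ 2 + ∑ k, c k * xstar k ≤
          (1 / 2 : ℝ) * ∑ k, s k * (x k) ^ 2 + ∑ k, c k * x k) →
      xstar n = 0 := by
  intro xstar hsph hmin
  by_contra hb
  have h0n : (0 : Fin (M+2)) ≠ n := fun h => hn h.symm
  set a := xstar 0 with ha
  set b := xstar n with hbdef
  have hr0 : (0:ℝ) ≤ a^2 + b^2 := by positivity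
  set r := Real.sqrt (a^2 + b^2) with hrdef
  have hr2 : r^2 = a^2 + b^2 := Real.sq_sqrt hr0
  set t : ℝ := if 0 < c 0 then -r else r with htdef
  have ht2 : t^2 = a^2 + b^2 := by
    rw [← hr2]; simp only [htdef]; split <;> ring
  have hc0 : c 0 ≠ 0 := hck 0 h0n
  have hct : c 0 * t = -(|c 0| * r) := by
    simp only [htdef]
    rcases lt_trichotomy (c 0) 0 with h | h | h
    · rw [if_neg (not_lt.2 h.le), abs_of_neg h]; ring
    · exact absurd h hc0
    · rw [if_pos h, abs_of_pos h]; ring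
  set y : Fin (M+2) → ℝ := fun k => if k = n then 0 else if k = 0 then t else xstar k with hy
  have hyn : y n = 0 := by simp [hy]
  have hy0 : y 0 = t := by simp [hy, h0n]
  have hyk : ∀ k, k ≠ 0 → k ≠ n → y k = xstar k := by
    intro k h1 h2; simp [hy, h1, h2]
  have key : ∀ f : Fin (M+2) → ℝ, ∑ k, f k = f 0 + f n + ∑ k ∈ Finset.univ \ {0, n}, f k := by
    intro f
    rw [← Finset.sum_sdiff (Finset.subset_univ ({0, n} : Finset (Fin (M+2)))),
      Finset.sum_pair h0n]
    ring
  have hdiff : ∀ k ∈ Finset.univ \ ({0, n} : Finset (Fin (M+2))), k ≠ 0 ∧ k ≠ n := by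
    intro k hk
    simp only [Finset.mem_sdiff, Finset.mem_insert, Finset.mem_singleton] at hk
    exact ⟨fun h => hk.2 (Or.inl h), fun h => hk.2 (Or.inr h)⟩
  have hsum_eq : ∀ g : Fin (M+2) → ℝ → ℝ,
      ∑ k ∈ Finset.univ \ ({0, n} : Finset (Fin (M+2))), g k (y k)
        = ∑ k ∈ Finset.univ \ ({0, n} : Finset (Fin (M+2))), g k (xstar k) := by
    intro g
    apply Finset.sum_congr rfl
    intro k hk
    rw [hyk k (hdiff k hk).1 (hdiff k hk).2]
  have hsphy : ∑ k, (y k)^2 = 1 := by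
    rw [key (fun k => (y k)^2), hy0, hyn, hsum_eq (fun k v => v^2), ht2]
    rw [key (fun k => (xstar k)^2)] at hsph
    linarith [hsph]
  have hle := hmin y hsphy
  rw [key (fun k => s k * (y k)^2), key (fun k => c k * y k),
      key (fun k => s k * (xstar k)^2), key (fun k => c k * xstar k),
      hy0, hyn, hsum_eq (fun k v => s k * v^2), hsum_eq (fun k v => c k * v)] at hle
  simp only [hcn, ht2, hct] at hle
  have hsn : s 0 ≤ s n := hs (Fin.zero_le n)
  have hb2 : 0 < b^2 := by positivity
  have har : |a| < r := by
    have h1 : |a| = Real.sqrt (a^2) := (Real.sqrt_sq_eq_abs a).symm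
    rw [h1, hrdef]
    apply Real.sqrt_lt_sqrt (by positivity)
    linarith
  have hca : -(|c 0| * |a|) ≤ c 0 * a := by
    calc -(|c 0| * |a|) = -|c 0 * a| := by rw [abs_mul]
    _ ≤ c 0 * a := neg_abs_le _
  have hcpos : 0 < |c 0| := abs_pos.2 hc0
  nlinarith [hle, mul_lt_mul_of_pos_left har hcpos, mul_nonneg (sub_nonneg.2 hsn) hb2.le]
end

section
/- Suppose c 0 = 0 and s k > 1 for every k ≠ 0, and set d = ∑_{k ≠ 0} (c k)^2/(s k − 1)^2. If d ≤ 1, then the vector x* defined by x* 0 = √(1 − d) and x* k = c k/(1 − s k) for k ≠ 0 satisfies ∑ k, (x* k)^2 = 1 and F(x*) ≤ F(x) for every x with ∑ k, (x k)^2 = 1; the same holds with x* 0 = −√(1 − d). -/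
lemma scqp_key (a c t : ℝ) (ha : 1 < a) :
    (1/2)*(a-1)*(c/(1-a))^2 + c*(c/(1-a)) ≤ (1/2)*(a-1)*t^2 + c*t := by
  have h1 : a - 1 ≠ 0 := by linarith
  have hu : c/(a-1)*(a-1) = c := div_mul_cancel₀ _ h1
  have h2 : c/(1-a) = -(c/(a-1)) := by rw [← div_neg]; ring_nf
  set u := c/(a-1) with hud
  rw [h2, ← hu]
  nlinarith [sq_nonneg (t + u), ha]

lemma sum_split_zero {M : ℕ} (f : Fin (M + 2) → ℝ) :
    ∑ k, f k = f 0 + ∑ k ∈ Finset.univ.filter (fun k : Fin (M + 2) => k ≠ 0), f k := by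
  rw [Finset.filter_ne', ← Finset.add_sum_erase _ f (Finset.mem_univ 0)]

/-- First case of Lemma 7 of the paper (`c 0 = 0` and `d ≤ 1`): with
`d = ∑_{k ≠ 0} (c k)²/(s k - 1)²`, the vector `x*` with `x* 0 = ±√(1 - d)` and
`x* k = c k/(1 - s k)` for `k ≠ 0` lies on the unit sphere and is a global minimiser
of the SCQP objective `F(x) = (1/2) ∑ k, s k (x k)^2 + ∑ k, c k x k`. -/
theorem scqp_c0_zero_d_le_one_minimiser (M : ℕ) (s c : Fin (M + 2) → ℝ)
    (hs : Monotone s) (hs0 : s 0 = 1)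
    (hc : ∑ k, (c k) ^ 2 = 1)
    (hc0 : c 0 = 0) (hsgt : ∀ k : Fin (M + 2), k ≠ 0 → 1 < s k)
    (d : ℝ)
    (hd_def : d = ∑ k ∈ Finset.univ.filter (fun k : Fin (M + 2) => k ≠ 0),
        (c k) ^ 2 / (s k - 1) ^ 2)
    (hd : d ≤ 1)
    (ε : ℝ) (hε : ε = 1 ∨ ε = -1)
    (xstar : Fin (M + 2) → ℝ)
    (hxstar0 : xstar 0 = ε * Real.sqrt (1 - d))
    (hxstark : ∀ k : Fin (M + 2), k ≠ 0 → xstar k = c k / (1 - s k)) :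
    ∑ k, (xstar k) ^ 2 = 1 ∧
      ∀ x : Fin (M + 2) → ℝ, ∑ k, (x k) ^ 2 = 1 →
        (1 / 2 : ℝ) * ∑ k, s k * (xstar k) ^ 2 + ∑ k, c k * xstar k ≤
          (1 / 2 : ℝ) * ∑ k, s k * (x k) ^ 2 + ∑ k, c k * x k := by
  have h1d : 0 ≤ 1 - d := by linarith
  have hε2 : ε ^ 2 = 1 := by rcases hε with h | h <;> rw [h] <;> norm_num
  have hsphere : ∑ k, (xstar k) ^ 2 = 1 := by
    rw [sum_split_zero (fun k => xstar k ^ 2)]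
    have h0 : xstar 0 ^ 2 = 1 - d := by
      rw [hxstar0, mul_pow, hε2, Real.sq_sqrt h1d, one_mul]
    have hrest : ∑ k ∈ Finset.univ.filter (fun k : Fin (M + 2) => k ≠ 0),
        xstar k ^ 2 = d := by
      rw [hd_def]
      apply Finset.sum_congr rfl
      intro k hk
      have hk0 : k ≠ 0 := (Finset.mem_filter.mp hk).2
      have hs1 : (1 : ℝ) - s k ≠ 0 := by have := hsgt k hk0; linarith
      rw [hxstark k hk0, div_pow]
      congr 1
      ring
    simp only [h0, hrest]
    ring
  refine ⟨hsphere, ?_⟩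
  intro x hx
  -- reduce to the shifted objective H(y) = ∑ (1/2)(s k - 1) y k² + c k * y k
  have key : ∀ y : Fin (M + 2) → ℝ, ∑ k, (y k) ^ 2 = 1 →
      (1 / 2 : ℝ) * ∑ k, s k * (y k) ^ 2 + ∑ k, c k * y k =
        1/2 + ∑ k, ((1/2)*(s k - 1)*(y k)^2 + c k * y k) := by
    intro y hy
    rw [Finset.sum_add_distrib]
    have : ∑ k, (1/2)*(s k - 1)*(y k)^2
        = (1/2) * ∑ k, s k * (y k)^2 - (1/2) * ∑ k, (y k)^2 := by
      rw [Finset.mul_sum, Finset.mul_sum, ← Finset.sum_sub_distrib]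
      apply Finset.sum_congr rfl; intro k _; ring
    rw [this, hy]
    ring
  rw [key xstar hsphere, key x hx]
  have : ∑ k, ((1/2)*(s k - 1)*(xstar k)^2 + c k * xstar k) ≤
      ∑ k, ((1/2)*(s k - 1)*(x k)^2 + c k * x k) := by
    apply Finset.sum_le_sum
    intro k _
    by_cases hk0 : k = 0
    · subst hk0
      rw [hs0, hc0]
      ring_nf
      norm_num
    · rw [hxstark k hk0]
      exact scqp_key (s k) (c k) (x k) (hsgt k hk0)
  linarith
end

section
/- Suppose c 0 = 0, c k ≠ 0 and s k > 1 for every k ≠ 0, and set d = ∑_{k ≠ 0} (c k)^2/(s k − 1)^2. If d > 1, then every global minimiser x* of the SCQP objective F over the unit sphere {x : ∑ k, (x k)^2 = 1} satisfies x* 0 = 0. -/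
/-!
Rotating a minimiser `x` of a separable objective on a sphere inside the coordinate plane
`(i, j)` stays on the sphere, so the derivative of the rotated objective vanishes: this is the
Lagrange condition `f'ᵢ xⱼ = f'ⱼ xᵢ`. For the SCQP with `s 0 = 1`, `c 0 = 0` and `x 0 ≠ 0`, the
condition in the planes `(0, k)` forces `x k = -c k / (s k - 1)`, whence
`∑ k, x k ^ 2 = x 0 ^ 2 + d > 1`, contradicting `x` being on the unit sphere.
-/

open Finset Function Real

section SeparableOnSphere

variable {ι : Type*} [Fintype ι] [DecidableEq ι]

lemma sum_apply_update_update (f : ι → ℝ → ℝ) (x : ι → ℝ) {i j : ι} (hij : i ≠ j) (a b : ℝ) :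
    ∑ k, f k (update (update x i a) j b k) =
      ∑ k, f k (x k) + (f i a - f i (x i)) + (f j b - f j (x j)) := by
  have hdiff : ∑ k, (f k (update (update x i a) j b k) - f k (x k)) =
      (f i a - f i (x i)) + (f j b - f j (x j)) := by
    rw [Fintype.sum_eq_add i j hij fun k ⟨hki, hkj⟩ => by simp [hki, hkj]]
    simp [hij]
  rw [sum_sub_distrib] at hdiff
  linarith

noncomputable def planeRotation (i j : ι) (t : ℝ) (x : ι → ℝ) : ι → ℝ :=
  update (update x i (x i * cos t - x j * sin t)) j (x i * sin t + x j * cos t)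

lemma sum_sq_planeRotation {i j : ι} (hij : i ≠ j) (t : ℝ) (x : ι → ℝ) :
    ∑ k, planeRotation i j t x k ^ 2 = ∑ k, x k ^ 2 := by
  rw [planeRotation, sum_apply_update_update (fun _ u => u ^ 2) x hij]
  linear_combination (x i ^ 2 + x j ^ 2) * sin_sq_add_cos_sq t

lemma mul_eq_mul_of_isMinOn_sphere {f f' : ι → ℝ → ℝ} {x : ι → ℝ}
    (hf : ∀ k, HasDerivAt (f k) (f' k (x k)) (x k))
    (hmin : IsMinOn (fun y : ι → ℝ => ∑ k, f k (y k)) {y | ∑ k, y k ^ 2 = ∑ k, x k ^ 2} x)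
    {i j : ι} (hij : i ≠ j) :
    f' i (x i) * x j = f' j (x j) * x i := by
  set g : ℝ → ℝ := fun t => f i (x i * cos t - x j * sin t) + f j (x i * sin t + x j * cos t)
  have hg_min : IsLocalMin g 0 := Filter.Eventually.of_forall fun t => by
    have h := isMinOn_iff.1 hmin _ (sum_sq_planeRotation hij t x)
    rw [planeRotation, sum_apply_update_update f x hij] at h
    simp only [g, cos_zero, sin_zero, mul_one, mul_zero, sub_zero, zero_add]
    linarith
  have hA : HasDerivAt (fun t => x i * cos t - x j * sin t) (-x j) 0 := by
    simpa using ((hasDerivAt_cos 0).const_mul (x i)).fun_sub ((hasDerivAt_sin 0).const_mul (x j))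
  have hB : HasDerivAt (fun t => x i * sin t + x j * cos t) (x i) 0 := by
    simpa using ((hasDerivAt_sin 0).const_mul (x i)).fun_add ((hasDerivAt_cos 0).const_mul (x j))
  have hg : HasDerivAt g (f' i (x i) * -x j + f' j (x j) * x i) 0 := by
    refine (HasDerivAt.comp 0 ?_ hA).add (HasDerivAt.comp 0 ?_ hB) <;> simpa using hf _
  linarith [hg_min.hasDerivAt_eq_zero hg]

end SeparableOnSphere

theorem scqp_c0_zero_d_gt_one_first_coord_vanishes_general (M : ℕ) (s c : Fin (M + 2) → ℝ)
    (hs0 : s 0 = 1)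
    (hc0 : c 0 = 0)
    (hsgt : ∀ k : Fin (M + 2), k ≠ 0 → 1 < s k)
    (d : ℝ)
    (hd_def : d = ∑ k ∈ Finset.univ.filter (fun k : Fin (M + 2) => k ≠ 0),
        (c k) ^ 2 / (s k - 1) ^ 2)
    (hd : 1 < d) :
    ∀ xstar : Fin (M + 2) → ℝ, ∑ k, (xstar k) ^ 2 = 1 →
      (∀ x : Fin (M + 2) → ℝ, ∑ k, (x k) ^ 2 = 1 →
        (1 / 2 : ℝ) * ∑ k, s k * (xstar k) ^ 2 + ∑ k, c k * xstar k ≤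
          (1 / 2 : ℝ) * ∑ k, s k * (x k) ^ 2 + ∑ k, c k * x k) →
      xstar 0 = 0 := by
  intro x hx hmin
  by_contra hx0
  have hsep : ∀ y : Fin (M + 2) → ℝ, (1 / 2 : ℝ) * ∑ k, s k * y k ^ 2 + ∑ k, c k * y k =
      ∑ k, (1 / 2 * s k * y k ^ 2 + c k * y k) := fun y => by
    rw [mul_sum, ← sum_add_distrib]
    simp only [mul_assoc]
  have hderiv : ∀ k, HasDerivAt (fun u => 1 / 2 * s k * u ^ 2 + c k * u) (s k * x k + c k) (x k) :=
    fun k => (((hasDerivAt_pow 2 (x k)).const_mul (1 / 2 * s k)).fun_add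
      ((hasDerivAt_id' (x k)).const_mul (c k))).congr_deriv (by push_cast; ring)
  have hcoord : ∀ k ≠ 0, x k = -c k / (s k - 1) := fun k hk => by
    have hlagrange := mul_eq_mul_of_isMinOn_sphere (f' := fun k u => s k * u + c k) hderiv
      (isMinOn_iff.2 fun y hy => by simpa only [hsep] using hmin y (hy.trans hx)) hk
    rw [hs0, hc0] at hlagrange
    have hsk : s k - 1 ≠ 0 := by linarith [hsgt k hk]
    have hstat : x 0 * ((s k - 1) * x k + c k) = 0 := by linear_combination hlagrange
    rw [eq_div_iff hsk]
    linear_combination (mul_eq_zero.1 hstat).resolve_left hx0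
  have hsplit : ∑ k, x k ^ 2 = x 0 ^ 2 + d := by
    rw [← add_sum_erase _ _ (mem_univ 0), hd_def, ← filter_ne']
    refine congrArg _ (sum_congr rfl fun k hk => ?_)
    rw [hcoord k (mem_filter.1 hk).2, div_pow, neg_sq]
  linarith [sq_pos_of_ne_zero hx0]

/-- Second case of Lemma 7 of the paper (`c 0 = 0` and `d > 1`): with
`d = ∑_{k ≠ 0} (c k)²/(s k - 1)² > 1`, every global minimiser of the SCQP objective
over the unit sphere has vanishing first coordinate. -/
theorem scqp_c0_zero_d_gt_one_first_coord_vanishes (M : ℕ) (s c : Fin (M + 2) → ℝ)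
    (hs : Monotone s) (hs0 : s 0 = 1)
    (hc : ∑ k, (c k) ^ 2 = 1)
    (hc0 : c 0 = 0)
    (hck : ∀ k : Fin (M + 2), k ≠ 0 → c k ≠ 0)
    (hsgt : ∀ k : Fin (M + 2), k ≠ 0 → 1 < s k)
    (d : ℝ)
    (hd_def : d = ∑ k ∈ Finset.univ.filter (fun k : Fin (M + 2) => k ≠ 0),
        (c k) ^ 2 / (s k - 1) ^ 2)
    (hd : 1 < d) :
    ∀ xstar : Fin (M + 2) → ℝ, ∑ k, (xstar k) ^ 2 = 1 →
      (∀ x : Fin (M + 2) → ℝ, ∑ k, (x k) ^ 2 = 1 →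
        (1 / 2 : ℝ) * ∑ k, s k * (xstar k) ^ 2 + ∑ k, c k * xstar k ≤
          (1 / 2 : ℝ) * ∑ k, s k * (x k) ^ 2 + ∑ k, c k * x k) →
      xstar 0 = 0 :=
  scqp_c0_zero_d_gt_one_first_coord_vanishes_general M s c hs0 hc0 hsgt d hd_def hd
end

section
/- Let L ≥ 1 and M ≥ 0, set K = L + M, and let s, c : Fin K → ℝ with s k = σ for every index k < L (a constant σ ∈ ℝ on the first block). Define s̃, c̃ : Fin (1 + M) → ℝ by s̃ 0 = σ, s̃ (j+1) = s (L+j), c̃ 0 = √(∑_{k < L} (c k)^2), and c̃ (j+1) = c (L+j). Then the infimum of F_{s,c}(x) = (1/2) ∑ k, s k * (x k)^2 + ∑ k, c k * x k over {x : Fin K → ℝ, ∑ k, (x k)^2 = 1} equals the infimum of F_{s̃,c̃}(z) = (1/2) ∑ j, s̃ j * (z j)^2 + ∑ j, c̃ j * z j over {z : Fin (1+M) → ℝ, ∑ j, (z j)^2 = 1}. -/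
/-!
Split a point as `x = (u, v)`, with `u` the coordinates of the repeated eigenvalue `σ`. On that
block the objective sees only `‖u‖²` and `⟪a, u⟫`, where `a` is the corresponding block of `c`.
By Cauchy–Schwarz `-‖a‖‖u‖ ≤ ⟪a, u⟫`, so collapsing `u` to the single coordinate `-‖u‖` stays on
the sphere and does not increase the objective; conversely a merged coordinate `t` is realised
exactly by `u = (t / ‖a‖) • a`, or by any `u` with `‖u‖ = |t|` if `a = 0`. Each value on one side
is thus dominated by a value on the other, so the infima agree.
-/

open Finset

namespace SCQP

section Block

variable {ι : Type*} [Fintype ι]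

noncomputable def objective (s c x : ι → ℝ) : ℝ :=
  1 / 2 * ∑ k, s k * x k ^ 2 + ∑ k, c k * x k

def unitSphere (ι : Type*) [Fintype ι] : Set (ι → ℝ) :=
  {x | ∑ k, x k ^ 2 = 1}

lemma objective_const (σ : ℝ) (a u : ι → ℝ) :
    objective (fun _ => σ) a u = σ / 2 * ∑ i, u i ^ 2 + ∑ i, a i * u i := by
  simp only [objective, ← mul_sum]
  ring

lemma neg_sqrt_mul_sqrt_le_sum_mul (a u : ι → ℝ) :
    -(√(∑ i, a i ^ 2) * √(∑ i, u i ^ 2)) ≤ ∑ i, a i * u i := by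
  simpa [neg_le] using Real.sum_mul_le_sqrt_mul_sqrt univ a (-u)

lemma exists_sum_sq_eq_and_sum_mul_eq [Nonempty ι] (a : ι → ℝ) (t : ℝ) :
    ∃ u : ι → ℝ, ∑ i, u i ^ 2 = t ^ 2 ∧ ∑ i, a i * u i = √(∑ i, a i ^ 2) * t := by
  classical
  rcases eq_or_ne a 0 with rfl | ha
  · obtain ⟨i⟩ := ‹Nonempty ι›
    exact ⟨Pi.single i t, by simp [sq, Pi.single_apply], by simp⟩
  have hA : 0 < ∑ i, a i ^ 2 := by
    obtain ⟨i, hi⟩ := Function.ne_iff.1 ha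
    exact sum_pos' (fun i _ => sq_nonneg _) ⟨i, mem_univ i, pow_two_pos_of_ne_zero hi⟩
  set r := √(∑ i, a i ^ 2)
  have hr : r ^ 2 = ∑ i, a i ^ 2 := Real.sq_sqrt hA.le
  have hr0 : r ≠ 0 := (Real.sqrt_pos.2 hA).ne'
  refine ⟨fun i => t / r * a i, ?_, ?_⟩
  · simp only [mul_pow, ← mul_sum, div_pow, ← hr]
    field_simp
  · simp only [mul_left_comm _ (t / _), ← mul_sum, ← sq, ← hr]
    field_simp

end Block

section Append

variable {m n : ℕ}

lemma sum_sq_append (u : Fin m → ℝ) (v : Fin n → ℝ) :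
    ∑ k, Fin.append u v k ^ 2 = ∑ i, u i ^ 2 + ∑ j, v j ^ 2 := by
  simp [Fin.sum_univ_add]

lemma objective_append (s₁ c₁ u : Fin m → ℝ) (s₂ c₂ v : Fin n → ℝ) :
    objective (Fin.append s₁ s₂) (Fin.append c₁ c₂) (Fin.append u v) =
      objective s₁ c₁ u + objective s₂ c₂ v := by
  simp only [objective, Fin.sum_univ_add, Fin.append_left, Fin.append_right]
  ring

lemma eq_append_of_castAdd_natAdd {α : Type*} {f : Fin (m + n) → α} {u : Fin m → α}
    {v : Fin n → α} (hu : ∀ i, f (Fin.castAdd n i) = u i) (hv : ∀ j, f (Fin.natAdd m j) = v j) :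
    f = Fin.append u v := by
  rw [← Fin.append_castAdd_natAdd (f := f)]
  simp only [hu, hv]

theorem sInf_objective_merge_const_block [NeZero m] (σ : ℝ) (a : Fin m → ℝ) (s c : Fin n → ℝ) :
    sInf (objective (Fin.append (fun _ => σ) s) (Fin.append a c) '' unitSphere (Fin (m + n))) =
      sInf (objective (Fin.append (fun _ : Fin 1 => σ) s)
        (Fin.append (fun _ => √(∑ i, a i ^ 2)) c) '' unitSphere (Fin (1 + n))) := by
  apply csInf_eq_csInf_of_forall_exists_le
  · rintro _ ⟨x, hx, rfl⟩
    obtain ⟨u, v, rfl⟩ : ∃ u v, x = Fin.append u v := ⟨_, _, Fin.append_castAdd_natAdd.symm⟩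
    have hu : √(∑ i, u i ^ 2) ^ 2 = ∑ i, u i ^ 2 := Real.sq_sqrt (sum_nonneg fun _ _ => sq_nonneg _)
    refine ⟨_, ⟨Fin.append (fun _ => -√(∑ i, u i ^ 2)) v, ?_, rfl⟩, ?_⟩
    · simpa [unitSphere, sum_sq_append, hu] using hx
    · simp only [objective_append, objective_const, Fin.sum_univ_one, neg_sq, hu]
      linarith [neg_sqrt_mul_sqrt_le_sum_mul a u]
  · rintro _ ⟨z, hz, rfl⟩
    obtain ⟨w, v, rfl⟩ : ∃ w v, z = Fin.append w v := ⟨_, _, Fin.append_castAdd_natAdd.symm⟩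
    obtain ⟨u, hu, hau⟩ := exists_sum_sq_eq_and_sum_mul_eq a (w 0)
    refine ⟨_, ⟨Fin.append u v, ?_, rfl⟩, le_of_eq ?_⟩
    · simpa [unitSphere, sum_sq_append, hu] using hz
    · simp only [objective_append, objective_const, Fin.sum_univ_one, hu, hau]

lemma sum_filter_val_lt_eq_sum_castAdd {β : Type*} [AddCommMonoid β] (f : Fin (m + n) → β) :
    ∑ k ∈ univ.filter (fun k : Fin (m + n) => (k : ℕ) < m), f k = ∑ i, f (Fin.castAdd n i) := by
  simp [sum_filter, Fin.sum_univ_add]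

end Append

end SCQP

open SCQP

/-- Block-merging step of Lemma 1 of the paper: if the first `L` eigenvalues of an
SCQP coincide (all equal to `σ`), they can be collapsed to a single coordinate, with
the corresponding linear coefficient replaced by the Euclidean norm of the first `L`
coefficients, without changing the optimal value over the unit sphere. -/
theorem scqp_merge_repeated_eigenvalues (L M : ℕ) (hL : 1 ≤ L)
    (s c : Fin (L + M) → ℝ) (σ : ℝ)
    (hconst : ∀ k : Fin (L + M), (k : ℕ) < L → s k = σ)
    (stilde ctilde : Fin (1 + M) → ℝ)
    (hst0 : stilde ⟨0, by omega⟩ = σ)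
    (hstj : ∀ j : Fin M, stilde ⟨1 + j.1, by have := j.isLt; omega⟩
        = s ⟨L + j.1, by have := j.isLt; omega⟩)
    (hct0 : ctilde ⟨0, by omega⟩
        = Real.sqrt (∑ k ∈ Finset.univ.filter (fun k : Fin (L + M) => (k : ℕ) < L),
            (c k) ^ 2))
    (hctj : ∀ j : Fin M, ctilde ⟨1 + j.1, by have := j.isLt; omega⟩
        = c ⟨L + j.1, by have := j.isLt; omega⟩) :
    sInf ((fun x : Fin (L + M) → ℝ =>
        (1 / 2 : ℝ) * ∑ k, s k * (x k) ^ 2 + ∑ k, c k * x k) ''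
          {x | ∑ k, (x k) ^ 2 = 1})
      = sInf ((fun z : Fin (1 + M) → ℝ =>
        (1 / 2 : ℝ) * ∑ j, stilde j * (z j) ^ 2 + ∑ j, ctilde j * z j) ''
          {z | ∑ j, (z j) ^ 2 = 1}) := by
  have : NeZero L := ⟨by omega⟩
  have hs : s = Fin.append (fun _ : Fin L => σ) (fun j => s (Fin.natAdd L j)) :=
    eq_append_of_castAdd_natAdd (fun i => hconst _ i.isLt) fun _ => rfl
  have hst : stilde = Fin.append (fun _ : Fin 1 => σ) (fun j => s (Fin.natAdd L j)) :=
    eq_append_of_castAdd_natAdd (fun i => by rw [Subsingleton.elim i 0]; exact hst0) hstj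
  have hct : ctilde = Fin.append (fun _ : Fin 1 => √(∑ i, c (Fin.castAdd M i) ^ 2))
      (fun j => c (Fin.natAdd L j)) :=
    eq_append_of_castAdd_natAdd (fun i => by
      rw [Subsingleton.elim i 0, ← sum_filter_val_lt_eq_sum_castAdd fun k => c k ^ 2]
      exact hct0) hctj
  have hmerge := sInf_objective_merge_const_block σ (fun i => c (Fin.castAdd M i))
    (fun j => s (Fin.natAdd L j)) (fun j => c (Fin.natAdd L j))
  rwa [← hs, ← hst, ← hct, Fin.append_castAdd_natAdd] at hmerge
end

section
/- Let K ≥ 0 and s, c : Fin K → ℝ be arbitrary. Define F(x) = (1/2) ∑ k, s k * (x k)^2 + ∑ k, c k * x k for x : Fin K → ℝ, and F̂(z) = (1/2) ∑ k, s k * (z (k+1))^2 + ∑ k, c k * z (k+1) for z : Fin (K+1) → ℝ (the coordinate z 0 does not appear in F̂). Then the infimum of F over the closed unit ball {x : ∑ k, (x k)^2 ≤ 1} equals the infimum of F̂ over the unit sphere {z : ∑ j, (z j)^2 = 1}. -/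
/-- Reduction of Section 2.6 of the paper: the infimum of the quadratic objective
`F(x) = (1/2) ∑ k, s k (x k)^2 + ∑ k, c k x k` over the closed unit ball in `ℝ^K`
equals the infimum over the unit sphere in `ℝ^{K+1}` of the objective applied to the
last `K` coordinates. -/
theorem scqp_ball_to_sphere (K : ℕ) (s c : Fin K → ℝ) :
    sInf ((fun x : Fin K → ℝ =>
        (1 / 2 : ℝ) * ∑ k, s k * (x k) ^ 2 + ∑ k, c k * x k) ''
          {x | ∑ k, (x k) ^ 2 ≤ 1})
      = sInf ((fun z : Fin (K + 1) → ℝ =>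
        (1 / 2 : ℝ) * ∑ k, s k * (z k.succ) ^ 2 + ∑ k, c k * z k.succ) ''
          {z | ∑ j, (z j) ^ 2 = 1}) := by
  congr 1
  ext y
  constructor
  · rintro ⟨x, hx, rfl⟩
    simp only [Set.mem_setOf_eq] at hx
    refine ⟨Fin.cons (Real.sqrt (1 - ∑ k, (x k) ^ 2)) x, ?_, by simp⟩
    have h1 : (0:ℝ) ≤ 1 - ∑ k, (x k) ^ 2 := sub_nonneg.mpr hx
    simp only [Set.mem_setOf_eq, Fin.sum_univ_succ, Fin.cons_zero, Fin.cons_succ]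
    rw [Real.sq_sqrt h1]
    ring
  · rintro ⟨z, hz, rfl⟩
    refine ⟨fun k => z k.succ, ?_, rfl⟩
    simp only [Set.mem_setOf_eq]
    have := Fin.sum_univ_succ (fun j => (z j) ^ 2)
    simp only [Set.mem_setOf_eq] at hz
    nlinarith [sq_nonneg (z 0)]
end

section
/- Let A be a real I × K matrix, y ∈ ℝ^I, and δ a real number with 0 ≤ δ < ‖y‖ (Euclidean norm). Suppose x* ∈ ℝ^K minimizes the Euclidean norm over the feasible set: ‖y − A·x*‖ ≤ δ and, for every x with ‖y − A·x‖ ≤ δ, ‖x*‖ ≤ ‖x‖. Then ‖y − A·x*‖ = δ. -/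
/-- Lemma 9 of the paper (linear regression with a bound constraint): if
`0 ≤ δ < ‖y‖` and `x*` is a minimum-norm point of the feasible set
`{x : ‖y - A x‖ ≤ δ}` (Euclidean norms), then `x*` attains the bound with
equality: `‖y - A x*‖ = δ`. Here `A x` is the matrix-vector product, realised by
`Matrix.toEuclideanLin`. -/
theorem bounded_regression_attains_bound (I K : ℕ)
    (A : Matrix (Fin I) (Fin K) ℝ) (y : EuclideanSpace ℝ (Fin I)) (δ : ℝ)
    (hδ0 : 0 ≤ δ) (hδy : δ < ‖y‖)
    (xstar : EuclideanSpace ℝ (Fin K))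
    (hfeas : ‖y - Matrix.toEuclideanLin A xstar‖ ≤ δ)
    (hmin : ∀ x : EuclideanSpace ℝ (Fin K),
      ‖y - Matrix.toEuclideanLin A x‖ ≤ δ → ‖xstar‖ ≤ ‖x‖) :
    ‖y - Matrix.toEuclideanLin A xstar‖ = δ := by
  by_contra hne
  set r := ‖y - Matrix.toEuclideanLin A xstar‖ with hr
  have hrδ : r < δ := lt_of_le_of_ne hfeas hne
  have hry : ‖y‖ - r > 0 := by
    have : r < ‖y‖ := lt_trans hrδ hδy
    linarith
  set t : ℝ := (‖y‖ - δ) / (‖y‖ - r) with ht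
  have ht0 : 0 < t := div_pos (by linarith) hry
  have ht1 : t < 1 := (div_lt_one hry).mpr (by linarith)
  have hfeas' : ‖y - Matrix.toEuclideanLin A (t • xstar)‖ ≤ δ := by
    have heq : y - Matrix.toEuclideanLin A (t • xstar)
        = (1 - t) • y + t • (y - Matrix.toEuclideanLin A xstar) := by
      rw [map_smul]
      module
    rw [heq]
    calc ‖(1 - t) • y + t • (y - Matrix.toEuclideanLin A xstar)‖
        ≤ ‖(1 - t) • y‖ + ‖t • (y - Matrix.toEuclideanLin A xstar)‖ := norm_add_le _ _
      _ = (1 - t) * ‖y‖ + t * r := by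
          rw [norm_smul, norm_smul, Real.norm_eq_abs, Real.norm_eq_abs,
            abs_of_pos (by linarith : (0:ℝ) < 1 - t), abs_of_pos ht0]
      _ ≤ δ := by
          have : t * (‖y‖ - r) = ‖y‖ - δ := by
            rw [ht, div_mul_cancel₀]
            exact ne_of_gt hry
          nlinarith
  have hle := hmin (t • xstar) hfeas'
  rw [norm_smul, Real.norm_eq_abs, abs_of_pos ht0] at hle
  have hxs : ‖xstar‖ = 0 := by nlinarith [norm_nonneg xstar]
  have : xstar = 0 := norm_eq_zero.mp hxs
  rw [this, map_zero, sub_zero] at hr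
  rw [hr] at hrδ
  linarith
end

section
/- Let A be a real I × K matrix, y ∈ ℝ^I, and δ a real number such that ‖y − P y‖ ≤ δ < ‖y‖, where P y is the orthogonal projection of y onto the column space of A (the range of the linear map x ↦ A·x) and ‖·‖ is the Euclidean norm. Then there exists x* ∈ ℝ^K with x* ≠ 0, ‖y − A·x*‖ ≤ δ, and ‖x*‖ ≤ ‖x‖ for every x ∈ ℝ^K satisfying ‖y − A·x‖ ≤ δ. -/
/-! The feasible set `{x | ‖y - A x‖ ≤ δ}` is closed, and it is nonempty because any preimage of
`P y` lies in it. A closed nonempty set in finite dimension has a point of least norm, and that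
point is not `0` because `‖y - A 0‖ = ‖y‖ > δ`. -/

theorem IsClosed.exists_isMinOn_norm {E : Type*} [SeminormedAddCommGroup E] [ProperSpace E]
    {s : Set E} (hs : IsClosed s) (hne : s.Nonempty) : ∃ x ∈ s, IsMinOn norm s x := by
  obtain ⟨x, hx, hdist⟩ := hs.exists_infDist_eq_dist hne 0
  refine ⟨x, hx, isMinOn_iff.mpr fun z hz => ?_⟩
  rw [← dist_zero_left, ← dist_zero_left, ← hdist]
  exact Metric.infDist_le_dist_of_mem hz

section BoundedRegression

variable {E F : Type*} [NormedAddCommGroup E] [NormedSpace ℝ E]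
  [NormedAddCommGroup F] [InnerProductSpace ℝ F] (L : E →ₗ[ℝ] F) (y : F)

theorem LinearMap.isClosed_setOf_norm_sub_le [FiniteDimensional ℝ E] (δ : ℝ) :
    IsClosed {x | ‖y - L x‖ ≤ δ} :=
  isClosed_le (continuous_const.sub L.continuous_of_finiteDimensional).norm continuous_const

theorem LinearMap.exists_norm_sub_le_of_norm_sub_orthogonalProjectionOnto_range_le
    [(LinearMap.range L).HasOrthogonalProjection] {δ : ℝ}
    (h : ‖y - ((LinearMap.range L).orthogonalProjectionOnto y : F)‖ ≤ δ) :
    ∃ x, ‖y - L x‖ ≤ δ := by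
  obtain ⟨x, hx⟩ := ((LinearMap.range L).orthogonalProjectionOnto y).2
  exact ⟨x, hx ▸ h⟩

theorem LinearMap.exists_isMinOn_norm_of_norm_sub_orthogonalProjectionOnto_range_le
    [FiniteDimensional ℝ E] [(LinearMap.range L).HasOrthogonalProjection] {δ : ℝ}
    (h : ‖y - ((LinearMap.range L).orthogonalProjectionOnto y : F)‖ ≤ δ) :
    ∃ x, ‖y - L x‖ ≤ δ ∧ IsMinOn norm {x | ‖y - L x‖ ≤ δ} x :=
  (L.isClosed_setOf_norm_sub_le y δ).exists_isMinOn_norm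
    (L.exists_norm_sub_le_of_norm_sub_orthogonalProjectionOnto_range_le y h)

end BoundedRegression

/-- 'Range of the bound δ' lemma of the paper: if
`‖y - P y‖ ≤ δ < ‖y‖`, where `P` is the orthogonal projection onto the column space
of `A` (the range of `x ↦ A x`), then the bounded regression problem
`min ‖x‖ s.t. ‖y - A x‖ ≤ δ` admits a nonzero minimum-norm solution. -/
theorem bounded_regression_nonzero_minimiser (I K : ℕ)
    (A : Matrix (Fin I) (Fin K) ℝ) (y : EuclideanSpace ℝ (Fin I)) (δ : ℝ)
    (hlow : ‖y - (Submodule.orthogonalProjectionOnto (LinearMap.range (Matrix.toEuclideanLin A)) y :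
        EuclideanSpace ℝ (Fin I))‖ ≤ δ)
    (hupp : δ < ‖y‖) :
    ∃ xstar : EuclideanSpace ℝ (Fin K), xstar ≠ 0 ∧
      ‖y - Matrix.toEuclideanLin A xstar‖ ≤ δ ∧
      ∀ x : EuclideanSpace ℝ (Fin K),
        ‖y - Matrix.toEuclideanLin A x‖ ≤ δ → ‖xstar‖ ≤ ‖x‖ := by
  obtain ⟨xstar, hfeasible, hmin⟩ :=
    (Matrix.toEuclideanLin A).exists_isMinOn_norm_of_norm_sub_orthogonalProjectionOnto_range_le
      y hlow
  refine ⟨xstar, ?_, hfeasible, fun x hx => hmin hx⟩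
  rintro rfl
  rw [map_zero, sub_zero] at hfeasible
  exact hupp.not_ge hfeasible
end
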